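/- Let K be a field of prime characteristic p, for k ≥ 0 set τ_k = Σ_{r=0}^{k} X^{p^r + p^{2r}} ∈ K[X], and let i ≥ 1 be an integer. Then the family of polynomials X^j · ∂_{p^k}(τ_k), indexed by the pairs (j, k) of nonnegative integers with ⌈i/2⌉ ≤ k ≤ i and j + p^k ≤ p^i, is linearly independent over K. -/

import Mathlib

/-!
Away from `k = 0`, `∂_{p^k} τ_k` is monic of degree `p^{2k}`: the top term of `τ_k` is
`X^{p^k + p^{2k}}`, and `binom(p^k + p^{2k}, p^k) ≡ 1 (mod p)`, read off from
`(1 + X)^{p^k + p^{2k}} = (1 + X^{p^k})(1 + X^{p^{2k}})` in characteristic `p`. Hence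
`X^j · ∂_{p^k} τ_k` has degree `j + p^{2k}`, and the constraints `⌈i/2⌉ ≤ k` and
`j + p^k ≤ p^i` force `j < p^{2k}`, so `k` is recovered from the degree as
`⌊log_p(j + p^{2k})⌋ / 2`. Polynomials of pairwise distinct degrees are linearly independent.
-/

open Polynomial

namespace Polynomial

theorem linearIndependent_of_natDegree_injective {R ι : Type*} [CommRing R] [IsDomain R]
    {f : ι → R[X]} (hf : ∀ i, f i ≠ 0) (hd : Function.Injective fun i => (f i).natDegree) :
    LinearIndependent R f := by
  rw [linearIndependent_iff']
  intro s g hsum i hi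
  have hdeg : degree (∑ j ∈ s, g j • f j) = s.sup fun j => degree (g j • f j) := by
    refine degree_sum_eq_of_disjoint _ s fun a ha b hb hab => ?_
    have hga : g a ≠ 0 := left_ne_zero_of_smul ha.2
    have hgb : g b ≠ 0 := left_ne_zero_of_smul hb.2
    simp only [Function.onFun, Function.comp_apply, degree_eq_natDegree ha.2,
      degree_eq_natDegree hb.2, natDegree_smul _ hga, natDegree_smul _ hgb, Ne, Nat.cast_inj]
    exact hd.ne hab
  have hgf : g i • f i = 0 := by
    rw [← degree_eq_bot, eq_bot_iff, ← (degree_zero : degree (0 : R[X]) = ⊥), ← hsum, hdeg]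
    exact Finset.le_sup (f := fun j => degree (g j • f j)) hi
  exact (smul_eq_zero.mp hgf).resolve_right (hf i)

end Polynomial

theorem Nat.cast_choose_pow_add_pow {R : Type*} [CommSemiring R] (p : ℕ) [Fact p.Prime]
    [CharP R p] {a b : ℕ} (hab : a ≠ b) : (((p ^ a + p ^ b).choose (p ^ a) : ℕ) : R) = 1 := by
  have hpa : p ^ a ≠ p ^ b := (Nat.pow_right_injective (Fact.out : p.Prime).two_le).ne hab
  rw [← coeff_X_add_one_pow, pow_add, add_pow_char_pow, add_pow_char_pow, one_pow, one_pow]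
  simp only [mul_add, add_mul, one_mul, mul_one, ← pow_add, coeff_add, coeff_X_pow, coeff_one]
  simp [hpa, (Fact.out : p.Prime).ne_zero]

theorem Nat.log_add_pow {p j m : ℕ} (hp : 2 ≤ p) (hj : j < p ^ m) : Nat.log p (j + p ^ m) = m :=
  Nat.log_eq_of_pow_le_of_lt_pow (Nat.le_add_left _ _) (by rw [pow_succ]; nlinarith)

noncomputable def tau (R : Type*) [Semiring R] (p k : ℕ) : R[X] :=
  ∑ r ∈ Finset.range (k + 1), X ^ (p ^ r + p ^ (2 * r))

section Tau

variable {R : Type*} {p : ℕ}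

theorem natDegree_tau_le [Semiring R] (hp : 0 < p) (k : ℕ) :
    (tau R p k).natDegree ≤ p ^ k + p ^ (2 * k) := by
  refine natDegree_sum_le_of_forall_le _ _ fun r hr => ?_
  have hrk : r ≤ k := Nat.lt_succ_iff.mp (Finset.mem_range.mp hr)
  refine (natDegree_X_pow_le _).trans ?_
  gcongr

theorem coeff_tau_pow_add_pow [Semiring R] (hp : 1 < p) (k : ℕ) :
    (tau R p k).coeff (p ^ k + p ^ (2 * k)) = 1 := by
  rw [tau, finsetSum_coeff, Finset.sum_eq_single_of_mem k (by simp), coeff_X_pow_self]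
  intro r hr hne
  have hrk : r < k := by have := Finset.mem_range.mp hr; omega
  have : p ^ r + p ^ (2 * r) < p ^ k + p ^ (2 * k) := by gcongr
  rw [coeff_X_pow, if_neg this.ne']

theorem natDegree_hasseDeriv_tau_le [Semiring R] (hp : 0 < p) (k : ℕ) :
    (hasseDeriv (p ^ k) (tau R p k)).natDegree ≤ p ^ (2 * k) :=
  (natDegree_hasseDeriv_le _ _).trans <| by
    have := natDegree_tau_le (R := R) hp k
    omega

variable [CommSemiring R] [Fact p.Prime] [CharP R p]

theorem coeff_hasseDeriv_tau {k : ℕ} (hk : k ≠ 0) :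
    (hasseDeriv (p ^ k) (tau R p k)).coeff (p ^ (2 * k)) = 1 := by
  have hp : 1 < p := (Fact.out : p.Prime).one_lt
  rw [hasseDeriv_coeff, add_comm, coeff_tau_pow_add_pow hp,
    Nat.cast_choose_pow_add_pow p (by omega : k ≠ 2 * k), one_mul]

theorem monic_hasseDeriv_tau {k : ℕ} (hk : k ≠ 0) : (hasseDeriv (p ^ k) (tau R p k)).Monic :=
  monic_of_natDegree_le_of_coeff_eq_one _ (natDegree_hasseDeriv_tau_le (Fact.out : p.Prime).pos k)
    (coeff_hasseDeriv_tau hk)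

theorem natDegree_hasseDeriv_tau [Nontrivial R] {k : ℕ} (hk : k ≠ 0) :
    (hasseDeriv (p ^ k) (tau R p k)).natDegree = p ^ (2 * k) :=
  natDegree_eq_of_le_of_coeff_ne_zero (natDegree_hasseDeriv_tau_le (Fact.out : p.Prime).pos k)
    (by rw [coeff_hasseDeriv_tau hk]; exact one_ne_zero)

theorem natDegree_X_pow_mul_hasseDeriv_tau [Nontrivial R] {j k : ℕ} (hk : k ≠ 0) :
    ((X : R[X]) ^ j * hasseDeriv (p ^ k) (tau R p k)).natDegree = j + p ^ (2 * k) := by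
  rw [(monic_X_pow j).natDegree_mul (monic_hasseDeriv_tau hk), natDegree_X_pow,
    natDegree_hasseDeriv_tau hk]

end Tau

/-- With `τ_k = Σ_{r=0}^{k} X^{p^r + p^{2r}}` in `K[X]`, `K` a field of prime
characteristic `p`, and `i ≥ 1`, the family of polynomials `X^j · ∂_{p^k}(τ_k)` indexed
by the pairs `(j, k)` with `⌈i/2⌉ ≤ k ≤ i` and `j + p^k ≤ p^i` is linearly independent
over `K`.  (Here `⌈i/2⌉ = (i+1)/2` in natural-number arithmetic.) -/
theorem linearIndependent_rjk (K : Type*) [Field K] (p : ℕ) [Fact p.Prime] [CharP K p]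
    (i : ℕ) (hi : 1 ≤ i) :
    LinearIndependent K
      (fun jk : {jk : ℕ × ℕ // (i + 1) / 2 ≤ jk.2 ∧ jk.2 ≤ i ∧ jk.1 + p ^ jk.2 ≤ p ^ i} =>
        (X : K[X]) ^ jk.1.1 *
          Polynomial.hasseDeriv (p ^ jk.1.2)
            (∑ r ∈ Finset.range (jk.1.2 + 1), (X : K[X]) ^ (p ^ r + p ^ (2 * r)))) := by
  have hp : 2 ≤ p := (Fact.out : p.Prime).two_le
  have hj {j k : ℕ} (hik : (i + 1) / 2 ≤ k) (hjk : j + p ^ k ≤ p ^ i) : j < p ^ (2 * k) := by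
    have : p ^ i ≤ p ^ (2 * k) := Nat.pow_le_pow_right (by omega) (by omega)
    have : 0 < p ^ k := by positivity
    omega
  refine linearIndependent_of_natDegree_injective (fun ⟨⟨j, k⟩, hik, _⟩ =>
    ((monic_X_pow j).mul (monic_hasseDeriv_tau (R := K) (by omega : k ≠ 0))).ne_zero) ?_
  intro ⟨⟨j, k⟩, hik, _, hjk⟩ ⟨⟨j', k'⟩, hik', _, hjk'⟩ h
  dsimp only at hik hjk hik' hjk' h
  rw [← tau, ← tau] at h
  rw [natDegree_X_pow_mul_hasseDeriv_tau (by omega), natDegree_X_pow_mul_hasseDeriv_tau (by omega)]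
    at h
  have hkk : 2 * k = 2 * k' := by
    rw [← Nat.log_add_pow hp (hj hik hjk), h, Nat.log_add_pow hp (hj hik' hjk')]
  obtain rfl : k = k' := by omega
  obtain rfl : j = j' := by omega
  rfl
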